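/- arXiv:1709.09759 — 3 statements merged into one kernel-verified Lean document; each statement's English description precedes it below -/
import Mathlib

section
/- Let H and K be complex Hilbert spaces, let q ≥ 1 be a real number, and let T₁, T₂ : H → K be compact operators such that T₁*T₁ and T₂*T₂ belong to the Schatten class C_q(H). Then T₁*T₂ belongs to C_q(H) and ‖T₁*T₂‖_{C_q}^q ≤ ‖T₁*T₁‖_{C_q}^q + ‖T₂*T₂‖_{C_q}^q. -/
open scoped Cardinal

/-- The `j`-th approximation number (`j = 0, 1, 2, …`) of a continuous linear map between
normed spaces: the distance from `T` to operators of rank at most `j`.  For a compact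
operator between Hilbert spaces this equals the `(j+1)`-st singular value `μ_{j+1}(T)`,
i.e. the `(j+1)`-st eigenvalue (in decreasing order, with multiplicity) of `(T*T)^{1/2}`. -/
noncomputable def sVal {H K : Type*} [NormedAddCommGroup H] [NormedSpace ℂ H]
    [NormedAddCommGroup K] [NormedSpace ℂ K] (T : H →L[ℂ] K) (j : ℕ) : ℝ :=
  sInf ((fun F : H →L[ℂ] K => ‖T - F‖) ''
    {F : H →L[ℂ] K | Module.rank ℂ (LinearMap.range F.toLinearMap) ≤ (j : Cardinal)})

/-- `T` belongs to the Schatten class `C_q`: the sequence of its singular values is in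
`ℓ^q`. -/
def MemSchatten {H K : Type*} [NormedAddCommGroup H] [NormedSpace ℂ H]
    [NormedAddCommGroup K] [NormedSpace ℂ K] (q : ℝ) (T : H →L[ℂ] K) : Prop :=
  Summable fun j : ℕ => sVal T j ^ q

/-- The Schatten `q`-norm `‖T‖_{C_q} = (Σ_j μ_j(T)^q)^{1/q}`. -/
noncomputable def schattenNorm {H K : Type*} [NormedAddCommGroup H] [NormedSpace ℂ H]
    [NormedAddCommGroup K] [NormedSpace ℂ K] (q : ℝ) (T : H →L[ℂ] K) : ℝ :=
  (∑' j : ℕ, sVal T j ^ q) ^ (1 / q)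

section Aux

variable {H K L : Type*} [NormedAddCommGroup H] [NormedSpace ℂ H]
  [NormedAddCommGroup K] [NormedSpace ℂ K]
  [NormedAddCommGroup L] [NormedSpace ℂ L]

lemma sVal_set_nonempty (T : H →L[ℂ] K) (j : ℕ) :
    ((fun F : H →L[ℂ] K => ‖T - F‖) ''
      {F : H →L[ℂ] K | Module.rank ℂ (LinearMap.range F.toLinearMap) ≤ (j : Cardinal)}).Nonempty := by
  refine ⟨‖T - 0‖, 0, ?_, rfl⟩
  have h0 : Module.rank ℂ (LinearMap.range (0 : H →L[ℂ] K).toLinearMap) = 0 := by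
    simp
  rw [Set.mem_setOf_eq, h0]
  exact zero_le

lemma sVal_nonneg (T : H →L[ℂ] K) (j : ℕ) : 0 ≤ sVal T j :=
  Real.sInf_nonneg (by rintro x ⟨F, _, rfl⟩; exact norm_nonneg _)

lemma sVal_le (T : H →L[ℂ] K) {j : ℕ} {F : H →L[ℂ] K}
    (hF : Module.rank ℂ (LinearMap.range F.toLinearMap) ≤ (j : Cardinal)) :
    sVal T j ≤ ‖T - F‖ :=
  csInf_le ⟨0, by rintro x ⟨G, _, rfl⟩; exact norm_nonneg _⟩ ⟨F, hF, rfl⟩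

lemma sVal_exists (T : H →L[ℂ] K) (j : ℕ) {ε : ℝ} (hε : 0 < ε) :
    ∃ F : H →L[ℂ] K, Module.rank ℂ (LinearMap.range F.toLinearMap) ≤ (j : Cardinal) ∧
      ‖T - F‖ < sVal T j + ε := by
  obtain ⟨x, ⟨F, hF, rfl⟩, hx⟩ := Real.lt_sInf_add_pos (sVal_set_nonempty T j) hε
  exact ⟨F, hF, hx⟩

lemma sVal_antitone (T : H →L[ℂ] K) {j j' : ℕ} (h : j ≤ j') : sVal T j' ≤ sVal T j := by
  refine csInf_le_csInf ⟨0, by rintro x ⟨G, _, rfl⟩; exact norm_nonneg _⟩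
    (sVal_set_nonempty T j) ?_
  rintro x ⟨F, hF, rfl⟩
  exact ⟨F, le_trans (α := Cardinal) hF (Nat.cast_le.mpr h), rfl⟩

lemma sVal_comp_le (S : K →L[ℂ] L) (T : H →L[ℂ] K) (m n : ℕ) :
    sVal (S.comp T) (m + n) ≤ sVal S m * sVal T n := by
  have key : ∀ ε : ℝ, 0 < ε → sVal (S.comp T) (m + n) ≤ (sVal S m + ε) * (sVal T n + ε) := by
    intro ε hε
    obtain ⟨F, hF, hFn⟩ := sVal_exists S m hε
    obtain ⟨G, hG, hGn⟩ := sVal_exists T n hε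
    set C : H →L[ℂ] L := F.comp T + (S - F).comp G with hC
    have hrank : Module.rank ℂ (LinearMap.range C.toLinearMap) ≤ ((m + n : ℕ) : Cardinal) := by
      have h1 : LinearMap.rank (C.toLinearMap) ≤
          LinearMap.rank ((F.comp T).toLinearMap) + LinearMap.rank (((S - F).comp G).toLinearMap) := by
        have : C.toLinearMap = (F.comp T).toLinearMap + ((S - F).comp G).toLinearMap := rfl
        rw [this]; exact LinearMap.rank_add_le _ _
      have h2 : LinearMap.rank ((F.comp T).toLinearMap) ≤ (m : Cardinal) := by
        refine le_trans ?_ hF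
        exact LinearMap.rank_comp_le_left T.toLinearMap F.toLinearMap
      have h3 : LinearMap.rank (((S - F).comp G).toLinearMap) ≤ (n : Cardinal) := by
        have hl := LinearMap.lift_rank_comp_le_right G.toLinearMap (S - F).toLinearMap
        have hl2 : Cardinal.lift.{_} (LinearMap.rank G.toLinearMap) ≤
            Cardinal.lift.{_} ((n : Cardinal)) := Cardinal.lift_le.mpr hG
        rw [← Cardinal.lift_le.{_}]
        refine le_trans hl ?_
        rw [Cardinal.lift_natCast]
        refine le_trans hl2 ?_
        rw [Cardinal.lift_natCast]
      calc LinearMap.rank (C.toLinearMap) ≤ _ := h1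
        _ ≤ (m : Cardinal) + (n : Cardinal) := add_le_add h2 h3
        _ = ((m + n : ℕ) : Cardinal) := by push_cast; ring
    have hid : S.comp T - C = (S - F).comp (T - G) := by
      ext x
      simp only [hC, ContinuousLinearMap.coe_sub', Pi.sub_apply, ContinuousLinearMap.coe_comp',
        Function.comp_apply, ContinuousLinearMap.add_apply, ContinuousLinearMap.comp_apply,
        ContinuousLinearMap.sub_apply, map_sub]
      abel
    have hb : ‖S.comp T - C‖ ≤ (sVal S m + ε) * (sVal T n + ε) := by
      rw [hid]
      refine le_trans (ContinuousLinearMap.opNorm_comp_le _ _) ?_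
      exact mul_le_mul hFn.le hGn.le (norm_nonneg _) (by have := sVal_nonneg S m; linarith)
    exact le_trans (sVal_le (S.comp T) hrank) hb
  have htend : Filter.Tendsto (fun ε : ℝ => (sVal S m + ε) * (sVal T n + ε))
      (nhdsWithin 0 (Set.Ioi 0)) (nhds (sVal S m * sVal T n)) := by
    have : Filter.Tendsto (fun ε : ℝ => (sVal S m + ε) * (sVal T n + ε))
        (nhds 0) (nhds ((sVal S m + 0) * (sVal T n + 0))) := by
      exact ((continuous_const.add continuous_id).mul
        (continuous_const.add continuous_id)).continuousAt
    simpa using this.mono_left nhdsWithin_le_nhds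
  refine ge_of_tendsto htend ?_
  filter_upwards [self_mem_nhdsWithin] with ε hε
  exact key ε hε

end Aux

section Hilbert

variable {H K : Type*} [NormedAddCommGroup H] [InnerProductSpace ℂ H] [CompleteSpace H]
  [NormedAddCommGroup K] [InnerProductSpace ℂ K] [CompleteSpace K]

open ContinuousLinearMap in
/-- The orthogonal complement of the kernel has dimension at most the rank. -/
lemma rank_ker_orthogonal_le (F : H →L[ℂ] K) {j : ℕ}
    (hF : Module.rank ℂ (LinearMap.range F.toLinearMap) ≤ (j : Cardinal)) :
    Module.rank ℂ ((F.ker)ᗮ : Submodule ℂ H) ≤ (j : Cardinal) := by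
  set M := F.ker
  have hinj : Function.Injective
      (LinearMap.codRestrict (LinearMap.range F.toLinearMap)
        (F.toLinearMap.domRestrict (Mᗮ : Submodule ℂ H))
        (fun x => LinearMap.mem_range_self _ _)) := by
    intro x y hxy
    have hv : F ((x : H)) = F ((y : H)) := by
      have := congrArg Subtype.val hxy
      exact this
    have hxy' : F ((x : H) - (y : H)) = 0 := by rw [map_sub, hv, sub_self]
    have hker : (x : H) - (y : H) ∈ M := hxy'
    have horth : (x : H) - (y : H) ∈ (Mᗮ : Submodule ℂ H) := sub_mem x.2 y.2
    have h0 : (inner ℂ ((x : H) - (y : H)) ((x : H) - (y : H)) : ℂ) = 0 :=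
      Submodule.inner_left_of_mem_orthogonal hker horth
    have hz : (x : H) - (y : H) = 0 := inner_self_eq_zero.mp h0
    exact Subtype.ext (sub_eq_zero.mp hz)
  have hlift := LinearMap.lift_rank_le_of_injective _ hinj
  rw [← Cardinal.lift_le.{_}]
  refine le_trans hlift ?_
  rw [Cardinal.lift_natCast]
  refine le_trans (Cardinal.lift_le.mpr hF) ?_
  rw [Cardinal.lift_natCast]

open ContinuousLinearMap in
lemma sVal_adjoint_le (T : H →L[ℂ] K) (j : ℕ) : sVal (adjoint T) j ≤ sVal T j := by
  refine le_of_forall_pos_le_add fun ε hε => ?_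
  obtain ⟨F, hF, hFn⟩ := sVal_exists T j hε
  have hrank : Module.rank ℂ (LinearMap.range (adjoint F).toLinearMap) ≤ (j : Cardinal) := by
    have hsub : LinearMap.range (adjoint F).toLinearMap ≤ (F.ker)ᗮ := by
      rintro y ⟨z, rfl⟩
      rw [Submodule.mem_orthogonal]
      intro u hu
      have : F u = 0 := hu
      rw [ContinuousLinearMap.coe_coe, adjoint_inner_right, this, inner_zero_left]
    exact le_trans (Submodule.rank_mono hsub) (rank_ker_orthogonal_le F hF)
  have hnorm : ‖adjoint T - adjoint F‖ = ‖T - F‖ := by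
    rw [← map_sub (adjoint : (H →L[ℂ] K) ≃ₗᵢ⋆[ℂ] (K →L[ℂ] H)) T F]
    exact (adjoint : (H →L[ℂ] K) ≃ₗᵢ⋆[ℂ] (K →L[ℂ] H)).norm_map _
  calc sVal (adjoint T) j ≤ ‖adjoint T - adjoint F‖ := sVal_le _ hrank
    _ = ‖T - F‖ := hnorm
    _ ≤ sVal T j + ε := hFn.le

open ContinuousLinearMap in
lemma sVal_mul_self_le (T : H →L[ℂ] K) (j : ℕ) :
    sVal T j * sVal T j ≤ sVal ((adjoint T).comp T) j := by
  set A := (adjoint T).comp T with hA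
  have hAnn := sVal_nonneg A j
  refine le_of_forall_pos_le_add fun ε hε => ?_
  obtain ⟨F, hF, hFn⟩ := sVal_exists A j hε
  set M := F.ker with hM
  haveI : CompleteSpace M := F.isClosed_ker.completeSpace_coe
  set P : H →L[ℂ] H := (Mᗮ).subtypeL.comp (Submodule.orthogonalProjection Mᗮ) with hP
  set G : H →L[ℂ] K := T.comp P with hGdef
  have hrankG : Module.rank ℂ (LinearMap.range G.toLinearMap) ≤ (j : Cardinal) := by
    have h1 : LinearMap.rank P.toLinearMap ≤ (j : Cardinal) := by
      have hsub : LinearMap.range P.toLinearMap ≤ Mᗮ := by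
        rintro y ⟨z, rfl⟩
        exact (Submodule.orthogonalProjection Mᗮ z).2
      exact le_trans (Submodule.rank_mono hsub) (rank_ker_orthogonal_le F hF)
    have hl := LinearMap.lift_rank_comp_le_right P.toLinearMap T.toLinearMap
    rw [← Cardinal.lift_le.{_}]
    refine le_trans hl ?_
    rw [Cardinal.lift_natCast]
    refine le_trans (Cardinal.lift_le.mpr h1) ?_
    rw [Cardinal.lift_natCast]
  have hker : ∀ x : H, x - P x ∈ M := by
    intro x
    have h1 : x - P x ∈ (Mᗮ)ᗮ := Submodule.sub_starProjection_mem_orthogonal (K := Mᗮ) x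
    rwa [Submodule.orthogonal_orthogonal] at h1
  have hbound : ∀ m : H, m ∈ M → ‖T m‖ * ‖T m‖ ≤ (sVal A j + ε) * (‖m‖ * ‖m‖) := by
    intro m hm
    have hFm : F m = 0 := hm
    have e1 : (inner ℂ ((A - F) m) m : ℂ) = inner ℂ (T m) (T m) := by
      rw [ContinuousLinearMap.sub_apply, hFm, sub_zero, hA, ContinuousLinearMap.comp_apply,
        adjoint_inner_left]
    have e2 : ‖T m‖ * ‖T m‖ = RCLike.re (inner ℂ ((A - F) m) m : ℂ) := by
      rw [e1, inner_self_eq_norm_sq]; ring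
    rw [e2]
    calc RCLike.re (inner ℂ ((A - F) m) m : ℂ) ≤ ‖(inner ℂ ((A - F) m) m : ℂ)‖ := RCLike.re_le_norm _
      _ ≤ ‖(A - F) m‖ * ‖m‖ := norm_inner_le_norm _ _
      _ ≤ (‖A - F‖ * ‖m‖) * ‖m‖ := by
          exact mul_le_mul_of_nonneg_right (le_opNorm _ _) (norm_nonneg _)
      _ ≤ ((sVal A j + ε) * ‖m‖) * ‖m‖ := by
          refine mul_le_mul_of_nonneg_right (mul_le_mul_of_nonneg_right hFn.le (norm_nonneg _))
            (norm_nonneg _)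
      _ = (sVal A j + ε) * (‖m‖ * ‖m‖) := by ring
  have hTG : ‖T - G‖ ≤ Real.sqrt (sVal A j + ε) := by
    refine opNorm_le_bound _ (Real.sqrt_nonneg _) fun x => ?_
    have hx : (T - G) x = T (x - P x) := by
      simp [hGdef, map_sub]
    rw [hx]
    have hm := hbound _ (hker x)
    have hmx : ‖x - P x‖ ≤ ‖x‖ := by
      have hortho : (inner ℂ (x - P x) (P x) : ℂ) = 0 :=
        Submodule.inner_right_of_mem_orthogonal (hker x) ((Submodule.orthogonalProjection Mᗮ x).2)
      have hsq := norm_add_sq_eq_norm_sq_add_norm_sq_of_inner_eq_zero _ _ hortho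
      have hxx : (x - P x) + P x = x := by abel
      rw [hxx] at hsq
      nlinarith [norm_nonneg (x - P x), norm_nonneg x, norm_nonneg (P x),
        mul_self_nonneg (‖P x‖)]
    have hc : (0 : ℝ) ≤ sVal A j + ε := by linarith
    calc ‖T (x - P x)‖ = Real.sqrt (‖T (x - P x)‖ * ‖T (x - P x)‖) :=
          (Real.sqrt_mul_self (norm_nonneg _)).symm
      _ ≤ Real.sqrt ((sVal A j + ε) * (‖x - P x‖ * ‖x - P x‖)) := Real.sqrt_le_sqrt hm
      _ = Real.sqrt (sVal A j + ε) * ‖x - P x‖ := by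
          rw [Real.sqrt_mul hc, Real.sqrt_mul_self (norm_nonneg _)]
      _ ≤ Real.sqrt (sVal A j + ε) * ‖x‖ :=
          mul_le_mul_of_nonneg_left hmx (Real.sqrt_nonneg _)
  have h1 : sVal T j ≤ Real.sqrt (sVal A j + ε) := le_trans (sVal_le T hrankG) hTG
  calc sVal T j * sVal T j ≤ Real.sqrt (sVal A j + ε) * Real.sqrt (sVal A j + ε) :=
        mul_le_mul h1 h1 (sVal_nonneg T j) (Real.sqrt_nonneg _)
    _ = sVal A j + ε := Real.mul_self_sqrt (by linarith)

end Hilbert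

/-- If `T₁, T₂ : H → K` are compact and `T₁*T₁, T₂*T₂ ∈ C_q` (`q ≥ 1`), then
`T₁*T₂ ∈ C_q` and `‖T₁*T₂‖_{C_q}^q ≤ ‖T₁*T₁‖_{C_q}^q + ‖T₂*T₂‖_{C_q}^q`. -/
theorem stmt_1 {H K : Type*}
    [NormedAddCommGroup H] [InnerProductSpace ℂ H] [CompleteSpace H]
    [NormedAddCommGroup K] [InnerProductSpace ℂ K] [CompleteSpace K]
    (q : ℝ) (hq : 1 ≤ q) (T₁ T₂ : H →L[ℂ] K)
    (hT₁ : IsCompactOperator (T₁ : H → K)) (hT₂ : IsCompactOperator (T₂ : H → K))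
    (h₁ : MemSchatten q ((ContinuousLinearMap.adjoint T₁).comp T₁))
    (h₂ : MemSchatten q ((ContinuousLinearMap.adjoint T₂).comp T₂)) :
    MemSchatten q ((ContinuousLinearMap.adjoint T₁).comp T₂) ∧
      schattenNorm q ((ContinuousLinearMap.adjoint T₁).comp T₂) ^ q ≤
        schattenNorm q ((ContinuousLinearMap.adjoint T₁).comp T₁) ^ q +
          schattenNorm q ((ContinuousLinearMap.adjoint T₂).comp T₂) ^ q := by
  classical
  set A := (ContinuousLinearMap.adjoint T₁).comp T₁ with hAdef
  set B := (ContinuousLinearMap.adjoint T₂).comp T₂ with hBdef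
  set S := (ContinuousLinearMap.adjoint T₁).comp T₂ with hSdef
  have hq0 : (0 : ℝ) < q := lt_of_lt_of_le one_pos hq
  set g : ℕ → ℝ := fun k => (sVal A k ^ q + sVal B k ^ q) / 2 with hg
  have hgsummable : Summable g := ((h₁.add h₂).div_const 2)
  -- pointwise bound
  have hpt : ∀ j : ℕ, sVal S j ^ q ≤ g (j / 2) := by
    intro j
    set k := j / 2 with hk
    have h2k : 2 * k ≤ j := by omega
    have s1 : sVal S j ≤ sVal S (2 * k) := sVal_antitone S h2k
    have s2 : sVal S (2 * k) ≤ sVal (ContinuousLinearMap.adjoint T₁) k * sVal T₂ k := by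
      rw [two_mul]
      exact sVal_comp_le (ContinuousLinearMap.adjoint T₁) T₂ k k
    have s3 : sVal (ContinuousLinearMap.adjoint T₁) k * sVal T₂ k ≤ sVal T₁ k * sVal T₂ k :=
      mul_le_mul_of_nonneg_right (sVal_adjoint_le T₁ k) (sVal_nonneg T₂ k)
    have hs : sVal S j ≤ sVal T₁ k * sVal T₂ k := le_trans s1 (le_trans s2 s3)
    have hx := sVal_nonneg T₁ k
    have hy := sVal_nonneg T₂ k
    have h4 : sVal S j ^ q ≤ (sVal T₁ k * sVal T₂ k) ^ q :=
      Real.rpow_le_rpow (sVal_nonneg S j) hs (le_of_lt hq0)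
    have h5 : (sVal T₁ k * sVal T₂ k) ^ q = sVal T₁ k ^ q * sVal T₂ k ^ q :=
      Real.mul_rpow hx hy
    have h6 : sVal T₁ k ^ q * sVal T₂ k ^ q ≤
        ((sVal T₁ k * sVal T₁ k) ^ q + (sVal T₂ k * sVal T₂ k) ^ q) / 2 := by
      have e1 : (sVal T₁ k * sVal T₁ k) ^ q = sVal T₁ k ^ q * sVal T₁ k ^ q := Real.mul_rpow hx hx
      have e2 : (sVal T₂ k * sVal T₂ k) ^ q = sVal T₂ k ^ q * sVal T₂ k ^ q := Real.mul_rpow hy hy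
      rw [e1, e2]
      nlinarith [sq_nonneg (sVal T₁ k ^ q - sVal T₂ k ^ q)]
    have h7 : (sVal T₁ k * sVal T₁ k) ^ q ≤ sVal A k ^ q :=
      Real.rpow_le_rpow (mul_nonneg hx hx) (sVal_mul_self_le T₁ k) (le_of_lt hq0)
    have h8 : (sVal T₂ k * sVal T₂ k) ^ q ≤ sVal B k ^ q :=
      Real.rpow_le_rpow (mul_nonneg hy hy) (sVal_mul_self_le T₂ k) (le_of_lt hq0)
    calc sVal S j ^ q ≤ sVal T₁ k ^ q * sVal T₂ k ^ q := by rw [← h5]; exact h4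
      _ ≤ ((sVal T₁ k * sVal T₁ k) ^ q + (sVal T₂ k * sVal T₂ k) ^ q) / 2 := h6
      _ ≤ g k := by rw [hg]; dsimp only; linarith
  have e1 : ∀ k : ℕ, (2 * k) / 2 = k := fun k => by omega
  have e2 : ∀ k : ℕ, (2 * k + 1) / 2 = k := fun k => by omega
  have he : Summable (fun k : ℕ => g ((2 * k) / 2)) := by simpa [e1] using hgsummable
  have ho : Summable (fun k : ℕ => g ((2 * k + 1) / 2)) := by simpa [e2] using hgsummable
  have hhalf : Summable fun j : ℕ => g (j / 2) := Summable.even_add_odd he ho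
  have hnonneg : ∀ j, 0 ≤ sVal S j ^ q := fun j => Real.rpow_nonneg (sVal_nonneg S j) q
  have hmem : MemSchatten q S := Summable.of_nonneg_of_le hnonneg hpt hhalf
  refine ⟨hmem, ?_⟩
  have hA' : Summable (fun j : ℕ => sVal A j ^ q) := h₁
  have hB' : Summable (fun j : ℕ => sVal B j ^ q) := h₂
  have htsum1 : ∑' j : ℕ, sVal S j ^ q ≤ ∑' j : ℕ, g (j / 2) := Summable.tsum_le_tsum hpt hmem hhalf
  have htg : ∑' j : ℕ, g (j / 2) = (∑' k : ℕ, sVal A k ^ q) + ∑' k : ℕ, sVal B k ^ q := by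
    have heo := tsum_even_add_odd (f := fun j : ℕ => g (j / 2)) he ho
    rw [← heo]
    have t1 : ∑' k : ℕ, g ((2 * k) / 2) = ∑' k : ℕ, g k := by
      congr 1; funext k; rw [e1]
    have t2 : ∑' k : ℕ, g ((2 * k + 1) / 2) = ∑' k : ℕ, g k := by
      congr 1; funext k; rw [e2]
    rw [t1, t2, hg]
    have t3 : ∑' k : ℕ, (sVal A k ^ q + sVal B k ^ q) / 2
        = ((∑' k : ℕ, sVal A k ^ q) + ∑' k : ℕ, sVal B k ^ q) / 2 := by
      rw [tsum_div_const, Summable.tsum_add hA' hB']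
    dsimp only
    rw [t3]
    ring
  have hpow : ∀ c : ℝ, 0 ≤ c → (c ^ (1 / q)) ^ q = c := by
    intro c hc
    rw [← Real.rpow_mul hc, one_div, inv_mul_cancel₀ hq0.ne', Real.rpow_one]
  simp only [schattenNorm]
  rw [hpow _ (tsum_nonneg fun j => Real.rpow_nonneg (sVal_nonneg S j) q),
    hpow _ (tsum_nonneg fun j => Real.rpow_nonneg (sVal_nonneg A j) q),
    hpow _ (tsum_nonneg fun j => Real.rpow_nonneg (sVal_nonneg B j) q)]
  rw [htg] at htsum1
  exact htsum1
end

section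
/- Let n ≥ 3 be an integer, let p be a real number with n/2 < p ≤ (n+1)/2, and let ε ∈ (0, π). Then there exists a constant C > 0, depending only on n, p and ε, such that for every z ∈ ℂ with z ≠ 0 and arg z ∈ [ε, 2π − ε], one has ∫₀^∞ λ^{−1+n/p} |λ² − z|^{−1} dλ ≤ C |z|^{−1 + n/(2p)}. -/
open MeasureTheory

set_option maxHeartbeats 1000000 in
/-- Kenig–Ruiz–Sogge type bound for the multiplier `λ ↦ λ^{-1+n/p} |λ² - z|⁻¹` on a closed
sector avoiding the positive real axis.  The condition `arg z ∈ [ε, 2π - ε]` (with the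
argument taken in `[0, 2π)`) is expressed equivalently as `ε ≤ |Complex.arg z|`, where
`Complex.arg` takes values in `(-π, π]`. -/
theorem stmt_5 (n : ℕ) (hn : 3 ≤ n) (p : ℝ) (hp1 : (n : ℝ) / 2 < p)
    (hp2 : p ≤ ((n : ℝ) + 1) / 2) (ε : ℝ) (hε : 0 < ε) (hεπ : ε < Real.pi) :
    ∃ C : ℝ, 0 < C ∧ ∀ z : ℂ, z ≠ 0 → ε ≤ |Complex.arg z| →
      ∫⁻ l in Set.Ioi (0 : ℝ),
          ENNReal.ofReal (l ^ (-1 + (n : ℝ) / p) * ‖(l : ℂ) ^ 2 - z‖⁻¹)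
        ≤ ENNReal.ofReal (C * ‖z‖ ^ (-1 + (n : ℝ) / (2 * p))) := by
  have hn3 : (3 : ℝ) ≤ (n : ℝ) := by exact_mod_cast hn
  have hp0 : 0 < p := by linarith
  set a : ℝ := (n : ℝ) / p with ha_def
  have ha1 : 1 < a := by rw [ha_def, lt_div_iff₀ hp0]; linarith
  have ha2 : a < 2 := by rw [ha_def, div_lt_iff₀ hp0]; linarith
  have ha0 : 0 < a := by linarith
  have h2a : 0 < 2 - a := by linarith
  set c₀ : ℝ := Real.sin (ε / 2) with hc_def
  have hc₀ : 0 < c₀ :=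
    Real.sin_pos_of_pos_of_lt_pi (by linarith) (by linarith [Real.pi_pos])
  have hc₀sq : c₀ ^ 2 = (1 - Real.cos ε) / 2 := by
    have h1 : Real.cos ε = 2 * Real.cos (ε / 2) ^ 2 - 1 := by
      rw [← Real.cos_two_mul]; ring_nf
    have h2 := Real.sin_sq_add_cos_sq (ε / 2)
    rw [hc_def]; nlinarith
  refine ⟨c₀⁻¹ * (1 / a + 1 / (2 - a)),
    mul_pos (inv_pos.2 hc₀) (add_pos (div_pos one_pos ha0) (div_pos one_pos h2a)), ?_⟩
  intro z hz hεz
  set R : ℝ := ‖z‖ with hR_def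
  have hR : 0 < R := norm_pos_iff.mpr hz
  set s : ℝ := R ^ ((1 : ℝ) / 2) with hs_def
  have hs : 0 < s := Real.rpow_pos_of_pos hR _
  -- z.re ≤ R cos ε
  have hcos : z.re ≤ R * Real.cos ε := by
    have h1 : Real.cos (Complex.arg z) = z.re / R := Complex.cos_arg hz
    have h2 : Real.cos |Complex.arg z| ≤ Real.cos ε :=
      Real.cos_le_cos_of_nonneg_of_le_pi hε.le (Complex.abs_arg_le_pi z) hεz
    rw [Real.cos_abs] at h2
    have h3 : z.re = R * Real.cos (Complex.arg z) := by
      rw [h1]; field_simp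
    rw [h3]
    exact mul_le_mul_of_nonneg_left h2 hR.le
  -- key pointwise lower bound
  have key : ∀ l : ℝ, c₀ * (l ^ 2 + R) ≤ ‖(l : ℂ) ^ 2 - z‖ := by
    intro l
    have habs : (‖(l : ℂ) ^ 2 - z‖) ^ 2 =
        (l ^ 2 - z.re) ^ 2 + z.im ^ 2 := by
      rw [Complex.sq_norm, Complex.normSq_apply]
      simp [Complex.sub_re, Complex.sub_im, ← Complex.ofReal_pow]
      ring
    have hRsq : R ^ 2 = z.re ^ 2 + z.im ^ 2 := by
      rw [hR_def, Complex.sq_norm, Complex.normSq_apply]; ring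
    have hsq : (c₀ * (l ^ 2 + R)) ^ 2 ≤ (‖(l : ℂ) ^ 2 - z‖) ^ 2 := by
      rw [habs]
      have expand : (c₀ * (l ^ 2 + R)) ^ 2 = (1 - Real.cos ε) / 2 * (l ^ 2 + R) ^ 2 := by
        rw [mul_pow, hc₀sq]
      rw [expand]
      nlinarith [mul_nonneg (by linarith [Real.neg_one_le_cos ε] : (0:ℝ) ≤ 1 + Real.cos ε)
          (sq_nonneg (l ^ 2 - R)),
        mul_nonneg (sq_nonneg l) (sub_nonneg.2 hcos)]
    have h1 := Real.sqrt_le_sqrt hsq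
    rwa [Real.sqrt_sq (by positivity), Real.sqrt_sq (norm_nonneg _)] at h1
  -- computations of the model integrals
  have hI1 : ∫⁻ l in Set.Ioc 0 s, ENNReal.ofReal (l ^ (-1 + a)) =
      ENNReal.ofReal (s ^ a / a) := by
    have hint : ∫ l in Set.Ioc 0 s, l ^ (-1 + a) = s ^ a / a := by
      rw [← intervalIntegral.integral_of_le hs.le,
        integral_rpow (Or.inl (by linarith : (-1 : ℝ) < -1 + a))]
      rw [show (-1 : ℝ) + a + 1 = a by ring, Real.zero_rpow (by linarith : a ≠ 0)]
      ring
    rw [← ofReal_integral_eq_lintegral_ofReal, hint]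
    · exact (intervalIntegral.intervalIntegrable_rpow' (by linarith)).1
    · exact ae_restrict_of_forall_mem measurableSet_Ioc
        fun x hx => Real.rpow_nonneg hx.1.le _
  have hI2 : ∫⁻ l in Set.Ioi s, ENNReal.ofReal (l ^ (a - 3)) =
      ENNReal.ofReal (s ^ (a - 2) / (2 - a)) := by
    have hint : ∫ l in Set.Ioi s, l ^ (a - 3) = s ^ (a - 2) / (2 - a) := by
      rw [integral_Ioi_rpow_of_lt (by linarith) hs,
        show a - 3 + 1 = a - 2 by ring]
      have hne : a - 2 ≠ 0 := by linarith
      have hne2 : (2 : ℝ) - a ≠ 0 := by linarith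
      field_simp
      ring
    rw [← ofReal_integral_eq_lintegral_ofReal, hint]
    · exact integrableOn_Ioi_rpow_of_lt (by linarith) hs
    · exact ae_restrict_of_forall_mem measurableSet_Ioi
        fun x hx => Real.rpow_nonneg (le_of_lt (lt_trans hs hx)) _
  -- chain of estimates
  calc
    ∫⁻ l in Set.Ioi (0 : ℝ),
        ENNReal.ofReal (l ^ (-1 + a) * (‖(l : ℂ) ^ 2 - z‖)⁻¹)
      ≤ ∫⁻ l in Set.Ioi (0 : ℝ),
          ENNReal.ofReal c₀⁻¹ * ENNReal.ofReal (l ^ (-1 + a) * (l ^ 2 + R)⁻¹) := by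
        refine setLIntegral_mono' measurableSet_Ioi fun l hl => ?_
        rw [← ENNReal.ofReal_mul (by positivity)]
        refine ENNReal.ofReal_le_ofReal ?_
        have hpos : 0 < c₀ * (l ^ 2 + R) := by positivity
        have hinv : (‖(l : ℂ) ^ 2 - z‖)⁻¹ ≤ (c₀ * (l ^ 2 + R))⁻¹ :=
          inv_anti₀ hpos (key l)
        calc l ^ (-1 + a) * (‖(l : ℂ) ^ 2 - z‖)⁻¹
            ≤ l ^ (-1 + a) * (c₀ * (l ^ 2 + R))⁻¹ :=
              mul_le_mul_of_nonneg_left hinv (Real.rpow_nonneg (le_of_lt hl) _)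
          _ = c₀⁻¹ * (l ^ (-1 + a) * (l ^ 2 + R)⁻¹) := by
              rw [mul_inv]; ring
    _ = ENNReal.ofReal c₀⁻¹ *
        ∫⁻ l in Set.Ioi (0 : ℝ), ENNReal.ofReal (l ^ (-1 + a) * (l ^ 2 + R)⁻¹) :=
        lintegral_const_mul' _ _ ENNReal.ofReal_ne_top
    _ ≤ ENNReal.ofReal c₀⁻¹ *
        (ENNReal.ofReal (s ^ a / a * R⁻¹) + ENNReal.ofReal (s ^ (a - 2) / (2 - a))) := by
        refine mul_le_mul_right ?_ _
        rw [show Set.Ioi (0 : ℝ) = Set.Ioc 0 s ∪ Set.Ioi s from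
          (Set.Ioc_union_Ioi_eq_Ioi hs.le).symm,
          lintegral_union measurableSet_Ioi Set.Ioc_disjoint_Ioi_same]
        refine add_le_add ?_ ?_
        · calc ∫⁻ l in Set.Ioc 0 s, ENNReal.ofReal (l ^ (-1 + a) * (l ^ 2 + R)⁻¹)
              ≤ ∫⁻ l in Set.Ioc 0 s,
                  ENNReal.ofReal (l ^ (-1 + a)) * ENNReal.ofReal R⁻¹ := by
                refine setLIntegral_mono' measurableSet_Ioc fun l hl => ?_
                rw [← ENNReal.ofReal_mul (Real.rpow_nonneg hl.1.le _)]
                refine ENNReal.ofReal_le_ofReal ?_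
                refine mul_le_mul_of_nonneg_left ?_ (Real.rpow_nonneg hl.1.le _)
                exact inv_anti₀ hR (by linarith [sq_nonneg l])
            _ = ENNReal.ofReal (s ^ a / a) * ENNReal.ofReal R⁻¹ := by
                rw [lintegral_mul_const' _ _ ENNReal.ofReal_ne_top, hI1]
            _ = ENNReal.ofReal (s ^ a / a * R⁻¹) := by
                rw [← ENNReal.ofReal_mul (by positivity)]
        · calc ∫⁻ l in Set.Ioi s, ENNReal.ofReal (l ^ (-1 + a) * (l ^ 2 + R)⁻¹)
              ≤ ∫⁻ l in Set.Ioi s, ENNReal.ofReal (l ^ (a - 3)) := by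
                refine setLIntegral_mono' measurableSet_Ioi fun l hl => ?_
                refine ENNReal.ofReal_le_ofReal ?_
                have hl0 : 0 < l := lt_trans hs hl
                have heq : l ^ (a - 3) = l ^ (-1 + a) * (l ^ 2)⁻¹ := by
                  rw [show a - 3 = (-1 + a) + (-2) by ring, Real.rpow_add hl0]
                  congr 1
                  rw [← Real.rpow_natCast l 2, ← Real.rpow_neg hl0.le]
                  norm_num
                rw [heq]
                refine mul_le_mul_of_nonneg_left ?_ (Real.rpow_nonneg hl0.le _)
                exact inv_anti₀ (pow_pos hl0 2) (by linarith)
            _ = ENNReal.ofReal (s ^ (a - 2) / (2 - a)) := hI2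
    _ = ENNReal.ofReal (c₀⁻¹ * (s ^ a / a * R⁻¹ + s ^ (a - 2) / (2 - a))) := by
        rw [← ENNReal.ofReal_add (by positivity) (by positivity),
          ← ENNReal.ofReal_mul (by positivity)]
    _ = ENNReal.ofReal (c₀⁻¹ * (1 / a + 1 / (2 - a)) * R ^ (-1 + (n : ℝ) / (2 * p))) := by
        congr 1
        have hsa : s ^ a = R ^ (a / 2) := by
          rw [hs_def, ← Real.rpow_mul hR.le]; congr 1; ring
        have hsa2 : s ^ (a - 2) = R ^ (-1 + a / 2) := by
          rw [hs_def, ← Real.rpow_mul hR.le]; congr 1; ring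
        have hmul : R ^ (a / 2) * R⁻¹ = R ^ (-1 + a / 2) := by
          rw [← Real.rpow_neg_one R, ← Real.rpow_add hR]; congr 1; ring
        have hexp : -1 + (n : ℝ) / (2 * p) = -1 + a / 2 := by
          rw [ha_def, div_div, mul_comm p 2]
        rw [hsa, hsa2, hexp, ← hmul]
        ring
end

section
/- Let δ ∈ (0, 1/4) and let φ ∈ C_c^∞(ℝ) with 0 ≤ φ ≤ 1 and supp φ ⊂ (1 − δ, 1 + δ). Then there exists a constant C > 0, depending only on φ, such that for all z > 0, all d > 0, all λ ∈ [1/2, 2], every sign ±, and every continuously differentiable function a : (0, ∞) → ℂ satisfying |a(σ)| ≤ (1 + σ d)^{−1} and |a'(σ)| ≤ σ^{−1} (1 + σ d)^{−1} for all σ > 0, one has | ∫₀^{√λ} φ(μ²) z μ² e^{± i √z μ d} a(√z μ) dμ | ≤ C λ^{1/2} d^{−2}. -/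
open MeasureTheory

set_option maxHeartbeats 1000000 in
/-- Stationary-phase type bound: for `φ ∈ C_c^∞` with `0 ≤ φ ≤ 1` supported in
`(1-δ, 1+δ)`, there is `C > 0` (depending only on `φ`) such that for all `z, d > 0`,
`λ ∈ [1/2, 2]`, both signs, and every `C¹` symbol `a` on `(0, ∞)` with
`|a(σ)| ≤ (1+σd)⁻¹` and `|a'(σ)| ≤ σ⁻¹ (1+σd)⁻¹`,
`|∫₀^{√λ} φ(μ²) z μ² e^{± i √z μ d} a(√z μ) dμ| ≤ C λ^{1/2} d⁻²`. -/
theorem stmt_15 (δ : ℝ) (hδ0 : 0 < δ) (hδ4 : δ < 1 / 4)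
    (φ : ℝ → ℝ) (hφsmooth : ContDiff ℝ (⊤ : ℕ∞) φ) (hφcpt : HasCompactSupport φ)
    (hφ01 : ∀ t, 0 ≤ φ t ∧ φ t ≤ 1)
    (hφsupp : tsupport φ ⊆ Set.Ioo (1 - δ) (1 + δ)) :
    ∃ C : ℝ, 0 < C ∧ ∀ z : ℝ, 0 < z → ∀ d : ℝ, 0 < d →
      ∀ lam : ℝ, lam ∈ Set.Icc (1 / 2 : ℝ) 2 →
      ∀ sgn : ℝ, sgn = 1 ∨ sgn = -1 →
      ∀ a a' : ℝ → ℂ,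
        (∀ σ : ℝ, 0 < σ → HasDerivAt a (a' σ) σ) →
        ContinuousOn a' (Set.Ioi (0 : ℝ)) →
        (∀ σ : ℝ, 0 < σ → ‖a σ‖ ≤ (1 + σ * d)⁻¹) →
        (∀ σ : ℝ, 0 < σ → ‖a' σ‖ ≤ σ⁻¹ * (1 + σ * d)⁻¹) →
        ‖∫ m in (0 : ℝ)..Real.sqrt lam,
            (φ (m ^ 2) : ℂ) * (z : ℂ) * (m : ℂ) ^ 2 *
              Complex.exp ((sgn : ℂ) * Complex.I * (Real.sqrt z : ℂ) * (m : ℂ) * (d : ℂ)) *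
              a (Real.sqrt z * m)‖
          ≤ C * Real.sqrt lam * (d ^ 2)⁻¹ := by
  obtain ⟨M0, hM0⟩ := (hφcpt.deriv).exists_bound_of_continuous (hφsmooth.continuous_deriv (by simp))
  set M : ℝ := max M0 0 with hMdef
  have hMnn : 0 ≤ M := le_max_right _ _
  have hM : ∀ x, |deriv φ x| ≤ M := fun x => le_trans (by simpa using hM0 x) (le_max_left _ _)
  have hφdc : Continuous (deriv φ) := hφsmooth.continuous_deriv (by simp)
  refine ⟨128 * M + 110, by positivity, ?_⟩
  intro z hz d hd lam hlam sgn hsgn a a' ha ha'c haB haB'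
  obtain ⟨hlam1, hlam2⟩ := hlam
  set S := Real.sqrt z with hSdef
  have hS0 : 0 < S := Real.sqrt_pos.mpr hz
  have hSz : S ^ 2 = z := Real.sq_sqrt hz.le
  set b := Real.sqrt lam with hbdef
  have hb0 : 0 < b := Real.sqrt_pos.mpr (by linarith)
  have hbsq : b ^ 2 = lam := Real.sq_sqrt (by linarith)
  have hbhalf : 1 / 2 ≤ b := by nlinarith
  have hb2 : b ≤ 2 := by nlinarith
  have hsgn1 : ‖(sgn : ℂ)‖ = 1 := by rcases hsgn with rfl | rfl <;> simp
  set K : ℂ := (sgn : ℂ) * Complex.I * (S : ℂ) * (d : ℂ) with hKdef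
  have hKnorm : ‖K‖ = S * d := by
    rw [hKdef]
    simp [norm_mul, hsgn1, Complex.norm_real, abs_of_pos hS0, abs_of_pos hd]
  have hK0 : K ≠ 0 := by
    intro h
    rw [h, norm_zero] at hKnorm
    nlinarith
  have hexpnorm : ∀ m : ℝ, ‖Complex.exp (K * (m : ℂ))‖ = 1 := by
    intro m
    have h : K * (m : ℂ) = ((sgn * S * d * m : ℝ) : ℂ) * Complex.I := by
      rw [hKdef]; push_cast; ring
    rw [h, Complex.norm_exp_ofReal_mul_I]
  have hφ0 : ∀ t : ℝ, t ≤ 3 / 4 → φ t = 0 := by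
    intro t ht
    apply image_eq_zero_of_notMem_tsupport
    intro hmem
    have h := hφsupp hmem
    simp only [Set.mem_Ioo] at h
    linarith [h.1]
  set F : ℝ → ℂ := fun m => ((φ (m ^ 2) * z * m ^ 2 : ℝ) : ℂ) * Complex.exp (K * (m : ℂ)) * a (S * m)
    with hFdef
  have hgoal : (∫ m in (0:ℝ)..b, (φ (m ^ 2) : ℂ) * (z : ℂ) * (m : ℂ) ^ 2 *
        Complex.exp ((sgn : ℂ) * Complex.I * (S : ℂ) * (m : ℂ) * (d : ℂ)) * a (S * m))
      = ∫ m in (0:ℝ)..b, F m := by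
    apply intervalIntegral.integral_congr
    intro m _
    beta_reduce
    have h : (sgn : ℂ) * Complex.I * (S : ℂ) * (m : ℂ) * (d : ℂ) = K * (m : ℂ) := by
      rw [hKdef]; ring
    rw [h, hFdef]
    push_cast
    ring
  rw [hgoal]
  have habs : |b - 0| = b := by rw [sub_zero, abs_of_pos hb0]
  rcases le_or_gt (S * d) 1 with hcase | hcase
  · -- trivial regime: z ≤ d⁻²
    have hzd : z ≤ (d ^ 2)⁻¹ := by
      have h1 : z * d ^ 2 ≤ 1 := by rw [← hSz]; nlinarith [mul_pos hS0 hd]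
      calc z = z * d ^ 2 * (d ^ 2)⁻¹ := by field_simp
        _ ≤ 1 * (d ^ 2)⁻¹ := mul_le_mul_of_nonneg_right h1 (by positivity)
        _ = (d ^ 2)⁻¹ := one_mul _
    have hbnd : ∀ m ∈ Set.uIoc (0:ℝ) b, ‖F m‖ ≤ 2 * (d ^ 2)⁻¹ := by
      intro m hm
      rw [Set.uIoc_of_le hb0.le, Set.mem_Ioc] at hm
      obtain ⟨hm0, hmb⟩ := hm
      have hSm : 0 < S * m := by positivity
      have hA := haB (S * m) hSm
      have hA1 : ‖a (S * m)‖ ≤ 1 := hA.trans (by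
        rw [inv_le_one_iff₀]
        right
        nlinarith)
      have hnm : ‖F m‖ = |φ (m ^ 2) * z * m ^ 2| * ‖a (S * m)‖ := by
        rw [hFdef]
        beta_reduce
        rw [norm_mul, norm_mul, Complex.norm_real, hexpnorm, mul_one, Real.norm_eq_abs]
      have hφle := (hφ01 (m ^ 2)).2
      have hφge := (hφ01 (m ^ 2)).1
      have hm2 : m ^ 2 ≤ 2 := by nlinarith
      have habsval : |φ (m ^ 2) * z * m ^ 2| = φ (m ^ 2) * z * m ^ 2 := by
        apply abs_of_nonneg; positivity
      rw [hnm, habsval]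
      calc φ (m ^ 2) * z * m ^ 2 * ‖a (S * m)‖ ≤ 1 * ((d ^ 2)⁻¹) * 2 * 1 := by
            apply mul_le_mul _ hA1 (norm_nonneg _) (by positivity)
            apply mul_le_mul _ hm2 (by positivity) (by positivity)
            exact mul_le_mul hφle hzd hz.le zero_le_one
        _ = 2 * (d ^ 2)⁻¹ := by ring
    calc ‖∫ m in (0:ℝ)..b, F m‖ ≤ 2 * (d ^ 2)⁻¹ * |b - 0| :=
          intervalIntegral.norm_integral_le_of_norm_le_const hbnd
      _ = 2 * (d ^ 2)⁻¹ * b := by rw [habs]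
      _ ≤ (128 * M + 110) * b * (d ^ 2)⁻¹ := by
            nlinarith [mul_nonneg (mul_nonneg hMnn hb0.le) (inv_pos.mpr (pow_pos hd 2)).le,
              mul_pos hb0 (inv_pos.mpr (pow_pos hd 2))]
  · -- oscillatory regime
    rcases lt_or_ge b (3/4 : ℝ) with hb34 | hb34
    · -- integrand vanishes identically
      have hbnd : ∀ m ∈ Set.uIoc (0:ℝ) b, ‖F m‖ ≤ 0 := by
        intro m hm
        rw [Set.uIoc_of_le hb0.le, Set.mem_Ioc] at hm
        have hm2 : m ^ 2 ≤ 3 / 4 := by nlinarith [hm.1, hm.2]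
        have h0 : φ (m ^ 2) = 0 := hφ0 _ hm2
        rw [hFdef]
        beta_reduce
        rw [h0]
        simp
      calc ‖∫ m in (0:ℝ)..b, F m‖ ≤ 0 * |b - 0| :=
            intervalIntegral.norm_integral_le_of_norm_le_const hbnd
        _ = 0 := by ring
        _ ≤ (128 * M + 110) * b * (d ^ 2)⁻¹ := by positivity
    · -- integration by parts on [3/4, b]
      have hcb : (3/4 : ℝ) ≤ b := hb34
      have hSd0 : 0 < S * d := by positivity
      have hdi : (0:ℝ) < (d ^ 2)⁻¹ := by positivity
      have hzz : z * ((S * d)⁻¹ * (S * d)⁻¹) = (d ^ 2)⁻¹ := by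
        rw [← hSz]; field_simp
      have haCont : ContinuousOn a (Set.Ioi (0:ℝ)) :=
        fun σ hσ => ((ha σ hσ).continuousAt).continuousWithinAt
      have hmaps : Set.MapsTo (fun m : ℝ => S * m) (Set.Icc (3/4:ℝ) b) (Set.Ioi (0:ℝ)) := by
        intro m hm
        have h1 : (3/4:ℝ) ≤ m := hm.1
        have h2 : (0:ℝ) < S * m := by nlinarith
        exact h2
      have hSmul : Continuous (fun m : ℝ => S * m) := continuous_const.mul continuous_id
      have hca : ContinuousOn (fun m : ℝ => a (S * m)) (Set.Icc (3/4:ℝ) b) :=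
        haCont.comp hSmul.continuousOn hmaps
      have hca' : ContinuousOn (fun m : ℝ => a' (S * m)) (Set.Icc (3/4:ℝ) b) :=
        ha'c.comp hSmul.continuousOn hmaps
      have hpc : Continuous (fun m : ℝ => ((φ (m ^ 2) * z * m ^ 2 : ℝ) : ℂ)) := by
        exact Complex.continuous_ofReal.comp
          (((hφsmooth.continuous.comp (continuous_pow 2)).mul continuous_const).mul
            (continuous_pow 2))
      have hp'c : Continuous (fun m : ℝ =>
          ((deriv φ (m ^ 2) * (2 * m) * z * m ^ 2 + φ (m ^ 2) * z * (2 * m) : ℝ) : ℂ)) := by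
        apply Complex.continuous_ofReal.comp
        apply Continuous.add
        · exact (((hφdc.comp (continuous_pow 2)).mul (by fun_prop)).mul
            continuous_const).mul (continuous_pow 2)
        · exact ((hφsmooth.continuous.comp (continuous_pow 2)).mul continuous_const).mul
            (by fun_prop)
      have hec : Continuous (fun m : ℝ => Complex.exp (K * (m:ℂ))) :=
        Complex.continuous_exp.comp (continuous_const.mul Complex.continuous_ofReal)
      set u : ℝ → ℂ := fun m => ((φ (m ^ 2) * z * m ^ 2 : ℝ) : ℂ) * a (S * m) with hudef
      set u' : ℝ → ℂ := fun m =>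
        ((deriv φ (m ^ 2) * (2 * m) * z * m ^ 2 + φ (m ^ 2) * z * (2 * m) : ℝ) : ℂ) * a (S * m)
          + ((φ (m ^ 2) * z * m ^ 2 : ℝ) : ℂ) * (S • a' (S * m)) with hu'def
      set v : ℝ → ℂ := fun m => K⁻¹ * Complex.exp (K * (m:ℂ)) with hvdef
      set v' : ℝ → ℂ := fun m => Complex.exp (K * (m:ℂ)) with hv'def
      have huIcc : Set.uIcc (3/4:ℝ) b = Set.Icc (3/4:ℝ) b := Set.uIcc_of_le hcb
      have hder_u : ∀ m ∈ Set.uIcc (3/4:ℝ) b, HasDerivAt u (u' m) m := by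
        intro m hm
        rw [huIcc] at hm
        have hm34 : (3/4:ℝ) ≤ m := hm.1
        have hSm : 0 < S * m := by nlinarith
        have hsq : HasDerivAt (fun m : ℝ => m ^ 2) (2 * m) m := by
          simpa using hasDerivAt_pow 2 m
        have hphi : HasDerivAt (fun m : ℝ => φ (m ^ 2)) (deriv φ (m ^ 2) * (2 * m)) m :=
          (((hφsmooth.differentiable (by simp)) (m ^ 2)).hasDerivAt).comp m hsq
        have hp : HasDerivAt (fun m : ℝ => φ (m ^ 2) * z * m ^ 2)
            (deriv φ (m ^ 2) * (2 * m) * z * m ^ 2 + φ (m ^ 2) * z * (2 * m)) m := by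
          have h := (hphi.mul_const z).mul hsq
          exact h.congr_deriv (by ring)
        have hq : HasDerivAt (fun m : ℝ => a (S * m)) (S • a' (S * m)) m := by
          have h2 : HasDerivAt (fun y : ℝ => S * y) S m := by
            simpa using (hasDerivAt_id m).const_mul S
          exact HasDerivAt.scomp m (ha (S * m) hSm) h2
        have h := (hp.ofReal_comp).mul hq
        rw [hudef, hu'def]
        exact h
      have hder_v : ∀ m ∈ Set.uIcc (3/4:ℝ) b, HasDerivAt v (v' m) m := by
        intro m _
        have h1 : HasDerivAt (fun m : ℝ => K * (m:ℂ)) K m := by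
          simpa using (Complex.ofRealCLM.hasDerivAt (x := m)).const_mul K
        have h2 := (h1.cexp).const_mul K⁻¹
        rw [hvdef, hv'def]
        refine h2.congr_deriv ?_
        beta_reduce
        rw [mul_comm (Complex.exp _) K, ← mul_assoc, inv_mul_cancel₀ hK0, one_mul]
      have hint_u' : IntervalIntegrable u' volume (3/4) b := by
        apply ContinuousOn.intervalIntegrable
        rw [huIcc]
        exact ((hp'c.continuousOn).mul hca).add ((hpc.continuousOn).mul (hca'.const_smul S))
      have hint_v' : IntervalIntegrable v' volume (3/4) b :=
        (hec.continuousOn).intervalIntegrable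
      have hibp := intervalIntegral.integral_mul_deriv_eq_deriv_mul hder_u hder_v hint_u' hint_v'
      have hu34 : u (3/4 : ℝ) = 0 := by
        rw [hudef]
        beta_reduce
        rw [hφ0 ((3/4:ℝ) ^ 2) (by norm_num)]
        simp
      have hF2 : (∫ m in (3/4:ℝ)..b, F m) = ∫ m in (3/4:ℝ)..b, u m * v' m := by
        apply intervalIntegral.integral_congr
        intro m _
        rw [hFdef, hudef, hv'def]
        beta_reduce
        ring
      have hEq1 : Set.EqOn F (fun _ => (0:ℂ)) (Set.uIcc (0:ℝ) (3/4)) := by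
        intro m hm
        rw [Set.uIcc_of_le (by norm_num : (0:ℝ) ≤ 3/4), Set.mem_Icc] at hm
        have hm2 : m ^ 2 ≤ 3 / 4 := by nlinarith [hm.1, hm.2]
        rw [hFdef]
        beta_reduce
        rw [hφ0 _ hm2]
        simp
      have hIntF1 : IntervalIntegrable F volume 0 (3/4) :=
        ((continuousOn_const (c := (0:ℂ))).congr hEq1).intervalIntegrable
      have hIntF2 : IntervalIntegrable F volume (3/4) b := by
        apply ContinuousOn.intervalIntegrable
        rw [huIcc]
        exact ((hpc.continuousOn).mul (hec.continuousOn)).mul hca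
      have hsplit : (∫ m in (0:ℝ)..b, F m) = ∫ m in (3/4:ℝ)..b, F m := by
        rw [← intervalIntegral.integral_add_adjacent_intervals hIntF1 hIntF2]
        have h0 : (∫ m in (0:ℝ)..(3/4:ℝ), F m) = 0 := by
          rw [intervalIntegral.integral_congr hEq1]
          simp
        rw [h0, zero_add]
      have hvnorm : ∀ m : ℝ, ‖v m‖ = (S * d)⁻¹ := by
        intro m
        rw [hvdef]
        beta_reduce
        rw [norm_mul, norm_inv, hKnorm, hexpnorm, mul_one]
      have hinv2 : ∀ m : ℝ, 1/2 ≤ m → (1 + S * m * d)⁻¹ ≤ 2 * (S * d)⁻¹ := by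
        intro m hm
        have h2 : (2:ℝ) * (S * d)⁻¹ = ((S * d) / 2)⁻¹ := by
          rw [inv_div, div_eq_mul_inv]
        rw [h2]
        apply inv_anti₀ (by positivity)
        nlinarith [mul_nonneg (mul_nonneg (sub_nonneg.mpr hm) hS0.le) hd.le]
      -- boundary term bound
      have hub : ‖u b * v b‖ ≤ 4 * (d ^ 2)⁻¹ := by
        have hSb : 0 < S * b := by positivity
        have hA2 : ‖a (S * b)‖ ≤ 2 * (S * d)⁻¹ := (haB _ hSb).trans (hinv2 b hbhalf)
        have hφb := hφ01 (b ^ 2)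
        have habs2 : |φ (b ^ 2) * z * b ^ 2| = φ (b ^ 2) * z * b ^ 2 := by
          apply abs_of_nonneg
          have := hφb.1
          positivity
        have hun : ‖u b‖ = φ (b ^ 2) * z * b ^ 2 * ‖a (S * b)‖ := by
          rw [hudef]
          beta_reduce
          rw [norm_mul, Complex.norm_real, Real.norm_eq_abs, habs2]
        have hbsq2 : b ^ 2 ≤ 2 := by rw [hbsq]; exact hlam2
        calc ‖u b * v b‖ = φ (b ^ 2) * z * b ^ 2 * ‖a (S * b)‖ * (S * d)⁻¹ := by
              rw [norm_mul, hun, hvnorm]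
          _ ≤ 1 * z * 2 * (2 * (S * d)⁻¹) * (S * d)⁻¹ := by
              gcongr <;> first | exact hφb.1 | exact hφb.2 | exact hbsq2
          _ = 4 * (z * ((S * d)⁻¹ * (S * d)⁻¹)) := by ring
          _ = 4 * (d ^ 2)⁻¹ := by rw [hzz]
      -- derivative term bound
      have hu'v : ∀ m ∈ Set.uIoc (3/4:ℝ) b, ‖u' m * v m‖ ≤ (32 * M + 24) * (d ^ 2)⁻¹ := by
        intro m hm
        rw [Set.uIoc_of_le hcb, Set.mem_Ioc] at hm
        obtain ⟨hm34, hmb⟩ := hm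
        have hmhalf : (1/2:ℝ) ≤ m := by linarith
        have hm0 : (0:ℝ) < m := by linarith
        have hm2 : m ≤ 2 := le_trans hmb hb2
        have hmsq : m ^ 2 ≤ 4 := by nlinarith
        have hSm : 0 < S * m := by positivity
        have hA2 : ‖a (S * m)‖ ≤ 2 * (S * d)⁻¹ := (haB _ hSm).trans (hinv2 m hmhalf)
        have hA'2 : ‖a' (S * m)‖ ≤ (2 * S⁻¹) * (2 * (S * d)⁻¹) := by
          refine (haB' _ hSm).trans ?_
          apply mul_le_mul ?_ (hinv2 m hmhalf) (by positivity) (by positivity)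
          have h2 : (2:ℝ) * S⁻¹ = (S / 2)⁻¹ := by rw [inv_div, div_eq_mul_inv]
          rw [h2]
          apply inv_anti₀ (by positivity)
          nlinarith [mul_nonneg (sub_nonneg.mpr hmhalf) hS0.le]
        have hD := hM (m ^ 2)
        have hφm := hφ01 (m ^ 2)
        have e1 : |deriv φ (m ^ 2) * (2 * m) * z * m ^ 2| ≤ 16 * M * z := by
          rw [abs_mul, abs_mul, abs_mul, abs_of_nonneg (by linarith : (0:ℝ) ≤ 2 * m),
            abs_of_pos hz, abs_of_nonneg (by positivity : (0:ℝ) ≤ m ^ 2)]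
          calc |deriv φ (m ^ 2)| * (2 * m) * z * m ^ 2 ≤ M * (2 * 2) * z * 4 := by
                gcongr
            _ = 16 * M * z := by ring
        have e2 : |φ (m ^ 2) * z * (2 * m)| ≤ 4 * z := by
          rw [abs_mul, abs_mul, abs_of_nonneg hφm.1, abs_of_pos hz,
            abs_of_nonneg (by linarith : (0:ℝ) ≤ 2 * m)]
          calc φ (m ^ 2) * z * (2 * m) ≤ 1 * z * (2 * 2) := by
                gcongr
                exact hφm.2
            _ = 4 * z := by ring
        have h1 : |deriv φ (m ^ 2) * (2 * m) * z * m ^ 2 + φ (m ^ 2) * z * (2 * m)|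
            ≤ (16 * M + 4) * z := by
          refine (abs_add_le _ _).trans ?_
          linarith
        have e3 : |φ (m ^ 2) * z * m ^ 2| ≤ 4 * z := by
          rw [abs_mul, abs_mul, abs_of_nonneg hφm.1, abs_of_pos hz,
            abs_of_nonneg (by positivity : (0:ℝ) ≤ m ^ 2)]
          calc φ (m ^ 2) * z * m ^ 2 ≤ 1 * z * 4 := by
                gcongr
                exact hφm.2
            _ = 4 * z := by ring
        have hnu' : ‖u' m‖ ≤ (16 * M + 4) * z * (2 * (S * d)⁻¹)
            + 4 * z * (S * ((2 * S⁻¹) * (2 * (S * d)⁻¹))) := by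
          rw [hu'def]
          beta_reduce
          refine (norm_add_le _ _).trans ?_
          have n1 : ‖((deriv φ (m ^ 2) * (2 * m) * z * m ^ 2 + φ (m ^ 2) * z * (2 * m) : ℝ) : ℂ)
              * a (S * m)‖ ≤ (16 * M + 4) * z * (2 * (S * d)⁻¹) := by
            rw [norm_mul, Complex.norm_real, Real.norm_eq_abs]
            exact mul_le_mul h1 hA2 (norm_nonneg _) (by positivity)
          have n2 : ‖((φ (m ^ 2) * z * m ^ 2 : ℝ) : ℂ) * (S • a' (S * m))‖
              ≤ 4 * z * (S * ((2 * S⁻¹) * (2 * (S * d)⁻¹))) := by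
            rw [norm_mul, Complex.norm_real, Real.norm_eq_abs, norm_smul,
              Real.norm_eq_abs, abs_of_pos hS0]
            apply mul_le_mul e3 ?_ (by positivity) (by positivity)
            exact mul_le_mul_of_nonneg_left hA'2 hS0.le
          linarith
        have key : ((16 * M + 4) * z * (2 * (S * d)⁻¹)
            + 4 * z * (S * ((2 * S⁻¹) * (2 * (S * d)⁻¹)))) * (S * d)⁻¹
            = (32 * M + 24) * (d ^ 2)⁻¹ := by
          rw [← hSz]
          field_simp
          ring
        calc ‖u' m * v m‖ = ‖u' m‖ * (S * d)⁻¹ := by rw [norm_mul, hvnorm]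
          _ ≤ ((16 * M + 4) * z * (2 * (S * d)⁻¹)
              + 4 * z * (S * ((2 * S⁻¹) * (2 * (S * d)⁻¹)))) * (S * d)⁻¹ :=
            mul_le_mul_of_nonneg_right hnu' (by positivity)
          _ = (32 * M + 24) * (d ^ 2)⁻¹ := key
      have hintbd : ‖∫ m in (3/4:ℝ)..b, u' m * v m‖ ≤ (32 * M + 24) * (d ^ 2)⁻¹ * |b - 3/4| :=
        intervalIntegral.norm_integral_le_of_norm_le_const hu'v
      have habs34 : |b - 3/4| ≤ 2 := by
        rw [abs_of_nonneg (by linarith)]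
        linarith
      rw [hsplit, hF2, hibp, hu34, zero_mul, sub_zero]
      calc ‖u b * v b - ∫ m in (3/4:ℝ)..b, u' m * v m‖
          ≤ ‖u b * v b‖ + ‖∫ m in (3/4:ℝ)..b, u' m * v m‖ := norm_sub_le _ _
        _ ≤ 4 * (d ^ 2)⁻¹ + (32 * M + 24) * (d ^ 2)⁻¹ * 2 := by
            refine add_le_add hub (hintbd.trans ?_)
            exact mul_le_mul_of_nonneg_left habs34 (by positivity)
        _ ≤ (128 * M + 110) * b * (d ^ 2)⁻¹ := by
            nlinarith [mul_nonneg (mul_nonneg hMnn (sub_nonneg.mpr hbhalf)) hdi.le,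
              mul_nonneg (sub_nonneg.mpr hbhalf) hdi.le,
              mul_nonneg hMnn hdi.le, hdi]
end
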